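/- arXiv:2104.13499 — 6 statements merged into one kernel-verified Lean document; each statement's English description precedes it below -/
import Mathlib

section
/- Let 0 < ε < 1, δ = √(2ε), and let P ⊆ ℝ² be a finite nonempty set. For every unit vector u ∈ ℝ², there exists an integer i with 1 ≤ i ≤ ⌈π/δ⌉ such that w(u_i, P) ≥ (1−ε)·w(u, P). -/
open Real RealInnerProductSpace

/-! If `p, q ∈ P` realise the width in direction `u`, then `w(u, P) = ⟪u, p - q⟫ ≤ ‖p - q‖`, while
`w(v, P) ≥ |⟪v, p - q⟫| = ‖p - q‖ |cos (φ - θ)|` for every direction `v` at angle `φ`, where `θ` is the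
angle of `p - q`. As `|cos|` has period `π`, we may take `θ ∈ [0, π)`, and the grid `iδ` contains a point
within `δ` of `θ`, where `cos ≥ 1 - δ² / 2 = 1 - ε`. -/

/-- The point of the Euclidean plane with coordinates `(a, b)`. -/
noncomputable def pt (a b : ℝ) : EuclideanSpace ℝ (Fin 2) :=
  (WithLp.equiv 2 (Fin 2 → ℝ)).symm ![a, b]

/-- The directional width of a finite nonempty point set `P` in direction `u`:
`max_{p ∈ P} ⟪u, p⟫ - min_{p ∈ P} ⟪u, p⟫`. -/
noncomputable def dirWidth (P : Finset (EuclideanSpace ℝ (Fin 2))) (hP : P.Nonempty)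
    (u : EuclideanSpace ℝ (Fin 2)) : ℝ :=
  P.sup' hP (fun p => ⟪u, p⟫) - P.inf' hP (fun p => ⟪u, p⟫)

lemma inner_pt (a b : ℝ) (x : EuclideanSpace ℝ (Fin 2)) :
    ⟪pt a b, x⟫ = a * x 0 + b * x 1 := by
  simp only [pt, WithLp.equiv_symm_apply, PiLp.inner_apply, RCLike.inner_apply, ringHom_apply,
    Fin.sum_univ_two, Fin.isValue, Matrix.cons_val_zero, Matrix.cons_val_one, Matrix.cons_val_fin_one]
  ring

lemma exists_inner_pt_cos_sin_eq_norm_mul_cos (x : EuclideanSpace ℝ (Fin 2)) :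
    ∃ θ : ℝ, ∀ φ : ℝ, ⟪pt (cos φ) (sin φ), x⟫ = ‖x‖ * cos (φ - θ) := by
  set z : ℂ := ⟨x 0, x 1⟩
  have hz : ‖z‖ = ‖x‖ := by
    rw [EuclideanSpace.norm_eq, Fin.sum_univ_two, Complex.norm_eq_sqrt_sq_add_sq]
    simp [z]
  have hre : ‖z‖ * cos z.arg = x 0 := Complex.norm_mul_cos_arg z
  have him : ‖z‖ * sin z.arg = x 1 := Complex.norm_mul_sin_arg z
  refine ⟨z.arg, fun φ => ?_⟩
  rw [inner_pt, cos_sub, ← hz]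
  linear_combination -cos φ * hre - sin φ * him

lemma inner_sub_le_dirWidth (P : Finset (EuclideanSpace ℝ (Fin 2))) (hP : P.Nonempty)
    (v : EuclideanSpace ℝ (Fin 2)) {p q : EuclideanSpace ℝ (Fin 2)} (hp : p ∈ P) (hq : q ∈ P) :
    ⟪v, p - q⟫ ≤ dirWidth P hP v := by
  rw [inner_sub_right, dirWidth]
  gcongr
  · exact Finset.le_sup' (fun p => ⟪v, p⟫) hp
  · exact Finset.inf'_le (fun p => ⟪v, p⟫) hq

lemma abs_inner_sub_le_dirWidth (P : Finset (EuclideanSpace ℝ (Fin 2))) (hP : P.Nonempty)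
    (v : EuclideanSpace ℝ (Fin 2)) {p q : EuclideanSpace ℝ (Fin 2)} (hp : p ∈ P) (hq : q ∈ P) :
    |⟪v, p - q⟫| ≤ dirWidth P hP v := by
  refine abs_le'.mpr ⟨inner_sub_le_dirWidth P hP v hp hq, ?_⟩
  rw [← inner_neg_right, neg_sub]
  exact inner_sub_le_dirWidth P hP v hq hp

lemma exists_dirWidth_eq_inner_sub (P : Finset (EuclideanSpace ℝ (Fin 2))) (hP : P.Nonempty)
    (u : EuclideanSpace ℝ (Fin 2)) : ∃ p ∈ P, ∃ q ∈ P, dirWidth P hP u = ⟪u, p - q⟫ := by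
  obtain ⟨p, hp, hpu⟩ := Finset.exists_mem_eq_sup' hP (fun p => ⟪u, p⟫)
  obtain ⟨q, hq, hqu⟩ := Finset.exists_mem_eq_inf' hP (fun p => ⟪u, p⟫)
  exact ⟨p, hp, q, hq, by rw [dirWidth, hpu, hqu, inner_sub_right]⟩

lemma exists_nat_mul_mem_Ioc {L δ α : ℝ} (hδ : 0 < δ) (hα₀ : 0 ≤ α) (hαL : α < L) :
    ∃ i : ℕ, 1 ≤ i ∧ i ≤ ⌈L / δ⌉₊ ∧ i * δ - α ∈ Set.Ioc 0 δ := by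
  refine ⟨⌊α / δ⌋₊ + 1, Nat.le_add_left 1 _,
    Nat.floor_lt_ceil_of_lt_of_pos (by gcongr) (by linarith [div_pos (hα₀.trans_lt hαL) hδ]), ?_, ?_⟩
  · have := Nat.lt_floor_add_one (α / δ)
    push_cast
    rw [div_lt_iff₀ hδ] at this
    linarith
  · have := Nat.floor_le (div_nonneg hα₀ hδ.le)
    push_cast
    rw [le_div_iff₀ hδ] at this
    linarith

lemma exists_nat_one_sub_sq_div_two_le_abs_cos {δ : ℝ} (hδ : 0 < δ) (θ : ℝ) :
    ∃ i : ℕ, 1 ≤ i ∧ i ≤ ⌈π / δ⌉₊ ∧ 1 - δ ^ 2 / 2 ≤ |cos (i * δ - θ)| := by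
  obtain ⟨α, ⟨hα₀, hαπ⟩, k, rfl⟩ : ∃ α ∈ Set.Ico 0 π, ∃ k : ℤ, θ = α + k * π :=
    ⟨toIcoMod pi_pos 0 θ, toIcoMod_mem_Ico' pi_pos θ, toIcoDiv pi_pos 0 θ,
      by rw [← zsmul_eq_mul, ← self_sub_toIcoMod]; ring⟩
  obtain ⟨i, hi₁, hiπ, hiδ₀, hiδ⟩ := exists_nat_mul_mem_Ioc hδ hα₀ hαπ
  refine ⟨i, hi₁, hiπ, ?_⟩
  calc 1 - δ ^ 2 / 2 ≤ 1 - (i * δ - α) ^ 2 / 2 := by gcongr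
    _ ≤ cos (i * δ - α) := one_sub_sq_div_two_le_cos
    _ ≤ |cos (i * δ - α)| := le_abs_self _
    _ = |cos (i * δ - (α + k * π))| := by
      rw [← sub_sub, cos_sub_int_mul_pi, abs_mul, abs_neg_one_zpow, one_mul]

theorem rounded_direction_width
    (ε : ℝ) (hε0 : 0 < ε) (hε1 : ε < 1)
    (δ : ℝ) (hδ : δ = Real.sqrt (2 * ε))
    (P : Finset (EuclideanSpace ℝ (Fin 2))) (hP : P.Nonempty)
    (u : EuclideanSpace ℝ (Fin 2)) (hu : ‖u‖ = 1) :
    ∃ i : ℕ, 1 ≤ i ∧ i ≤ ⌈Real.pi / δ⌉₊ ∧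
      dirWidth P hP (pt (Real.cos (i * δ)) (Real.sin (i * δ))) ≥ (1 - ε) * dirWidth P hP u := by
  have hδ₀ : 0 < δ := hδ ▸ Real.sqrt_pos.mpr (by linarith)
  have hδε : 1 - δ ^ 2 / 2 = 1 - ε := by rw [hδ, Real.sq_sqrt (by linarith)]; ring
  obtain ⟨p, hp, q, hq, hwu⟩ := exists_dirWidth_eq_inner_sub P hP u
  obtain ⟨θ, hθ⟩ := exists_inner_pt_cos_sin_eq_norm_mul_cos (p - q)
  obtain ⟨i, hi₁, hiπ, hcos⟩ := exists_nat_one_sub_sq_div_two_le_abs_cos hδ₀ θ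
  refine ⟨i, hi₁, hiπ, ?_⟩
  have hpq : ⟪u, p - q⟫ ≤ ‖p - q‖ := by simpa [hu] using real_inner_le_norm u (p - q)
  calc (1 - ε) * dirWidth P hP u ≤ (1 - ε) * ‖p - q‖ := by
        rw [hwu]; exact mul_le_mul_of_nonneg_left hpq (sub_nonneg.mpr hε1.le)
    _ ≤ ‖p - q‖ * |cos (i * δ - θ)| := by
        rw [mul_comm, ← hδε]; gcongr
    _ = |⟪pt (cos (i * δ)) (sin (i * δ)), p - q⟫| := by
        rw [hθ, abs_mul, abs_norm]
    _ ≤ dirWidth P hP (pt (cos (i * δ)) (sin (i * δ))) := abs_inner_sub_le_dirWidth P hP _ hp hq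
end

section
/- Let 0 < ε < 1, δ = √(2ε), and let P ⊆ ℝ² be a finite nonempty set. Suppose Q ⊆ P is a subset such that for every integer i with 1 ≤ i ≤ ⌈π/δ⌉, Q contains some point of P maximizing p ↦ ⟨u_i, p⟩ over P and some point of P minimizing p ↦ ⟨u_i, p⟩ over P. Then diam(Q) ≥ (1−ε)·diam(P). -/
open Real RealInnerProductSpace

/-- The diameter of a finite nonempty point set: `max_{p, q ∈ P} ‖p - q‖`. -/
noncomputable def fdiam (P : Finset (EuclideanSpace ℝ (Fin 2))) (hP : P.Nonempty) : ℝ :=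
  (P ×ˢ P).sup' (hP.product hP) (fun pq => dist pq.1 pq.2)

/-!
Let `p, q ∈ P` realise the diameter and let `θ ∈ (0, π]` be the angle of the line through them,
so that `|⟪u_φ, p - q⟫| = ‖p - q‖ |cos (φ - θ)|`. The rounded direction `u_i` with
`i = ⌈θ / δ⌉` is within `δ` of `θ`, hence `|⟪u_i, p - q⟫| ≥ (1 - δ² / 2) ‖p - q‖ = (1 - ε) diam P`.
On the other hand the extent of `P` in direction `u_i` is `⟪u_i, q_max - q_min⟫ ≤ ‖q_max - q_min‖`
for the two extreme points `q_max, q_min ∈ Q`, which is at most `diam Q`.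
-/

lemma dist_le_fdiam {P : Finset (EuclideanSpace ℝ (Fin 2))} (hP : P.Nonempty)
    {p q : EuclideanSpace ℝ (Fin 2)} (hp : p ∈ P) (hq : q ∈ P) : dist p q ≤ fdiam P hP :=
  Finset.le_sup' (fun pq : _ × _ => dist pq.1 pq.2) (b := (p, q)) (Finset.mem_product.2 ⟨hp, hq⟩)

lemma exists_fdiam_eq_dist (P : Finset (EuclideanSpace ℝ (Fin 2))) (hP : P.Nonempty) :
    ∃ p ∈ P, ∃ q ∈ P, fdiam P hP = dist p q := by
  obtain ⟨⟨p, q⟩, hpq, h⟩ :=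
    Finset.exists_mem_eq_sup' (hP.product hP) (fun pq : _ × _ => dist pq.1 pq.2)
  rw [Finset.mem_product] at hpq
  exact ⟨p, hpq.1, q, hpq.2, h⟩

lemma norm_eq_norm_complex (v : EuclideanSpace ℝ (Fin 2)) : ‖v‖ = ‖(⟨v 0, v 1⟩ : ℂ)‖ := by
  rw [EuclideanSpace.norm_eq, Fin.sum_univ_two, Complex.norm_def, Complex.normSq_mk]
  simp only [Real.norm_eq_abs, sq_abs]
  ring_nf

lemma norm_pt_cos_sin (φ : ℝ) : ‖pt (cos φ) (sin φ)‖ = 1 := by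
  rw [norm_eq_norm_complex, Complex.norm_def, Complex.normSq_mk]
  simp [pt, ← sq, cos_sq_add_sin_sq]

lemma exists_abs_re_mul_cos_add_im_mul_sin_eq (z : ℂ) :
    ∃ θ ∈ Set.Ioc 0 π, ∀ φ : ℝ,
      |z.re * cos φ + z.im * sin φ| = ‖z‖ * |cos (φ - θ)| := by
  have h (φ : ℝ) : z.re * cos φ + z.im * sin φ = ‖z‖ * cos (φ - z.arg) := by
    rw [cos_sub, ← Complex.norm_mul_cos_arg, ← Complex.norm_mul_sin_arg]
    ring
  rcases lt_or_ge 0 z.arg with hpos | hnonpos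
  · exact ⟨z.arg, ⟨hpos, z.arg_le_pi⟩, fun φ => by rw [h, abs_mul, abs_norm]⟩
  · refine ⟨z.arg + π, ⟨by linarith [z.neg_pi_lt_arg], by linarith⟩, fun φ => ?_⟩
    rw [h, abs_mul, abs_norm, show φ - (z.arg + π) = φ - z.arg - π by ring, cos_sub_pi, abs_neg]

lemma exists_abs_inner_pt_cos_sin_eq (v : EuclideanSpace ℝ (Fin 2)) :
    ∃ θ ∈ Set.Ioc 0 π, ∀ φ : ℝ, |⟪pt (cos φ) (sin φ), v⟫| = ‖v‖ * |cos (φ - θ)| := by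
  obtain ⟨θ, hθ, h⟩ := exists_abs_re_mul_cos_add_im_mul_sin_eq ⟨v 0, v 1⟩
  refine ⟨θ, hθ, fun φ => ?_⟩
  rw [inner_pt, norm_eq_norm_complex, ← h, mul_comm (cos φ), mul_comm (sin φ)]

lemma one_sub_sq_div_two_le_abs_cos_ceil_div_mul_sub {θ δ : ℝ} (hθ : 0 ≤ θ) (hδ : 0 < δ) :
    1 - δ ^ 2 / 2 ≤ |cos (⌈θ / δ⌉₊ * δ - θ)| := by
  set α := ⌈θ / δ⌉₊ * δ - θ
  have hα0 : 0 ≤ α := by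
    have := (div_le_iff₀ hδ).1 (Nat.le_ceil (θ / δ))
    linarith
  have hαδ : α ≤ δ := by
    have : ((⌈θ / δ⌉₊ : ℝ) - 1) * δ < θ :=
      (lt_div_iff₀ hδ).1 (by linarith [Nat.ceil_lt_add_one (div_nonneg hθ hδ.le)])
    linarith [sub_one_mul (⌈θ / δ⌉₊ : ℝ) δ]
  calc 1 - δ ^ 2 / 2 ≤ 1 - α ^ 2 / 2 := by gcongr
    _ ≤ cos α := one_sub_sq_div_two_le_cos
    _ ≤ |cos α| := le_abs_self _

lemma abs_inner_sub_le_fdiam {P Q : Finset (EuclideanSpace ℝ (Fin 2))} (hQ : Q.Nonempty)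
    {u : EuclideanSpace ℝ (Fin 2)} (hu : ‖u‖ ≤ 1)
    (hmax : ∃ q ∈ Q, ∀ p ∈ P, ⟪u, p⟫ ≤ ⟪u, q⟫) (hmin : ∃ q ∈ Q, ∀ p ∈ P, ⟪u, q⟫ ≤ ⟪u, p⟫)
    {p q : EuclideanSpace ℝ (Fin 2)} (hp : p ∈ P) (hq : q ∈ P) :
    |⟪u, p - q⟫| ≤ fdiam Q hQ := by
  obtain ⟨a, ha, hamax⟩ := hmax
  obtain ⟨b, hb, hbmin⟩ := hmin
  calc |⟪u, p - q⟫| ≤ ⟪u, a - b⟫ := by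
        rw [inner_sub_right, inner_sub_right, abs_sub_le_iff]
        constructor <;> linarith [hamax p hp, hamax q hq, hbmin p hp, hbmin q hq]
    _ ≤ ‖a - b‖ := (real_inner_le_norm _ _).trans (mul_le_of_le_one_left (norm_nonneg _) hu)
    _ = dist a b := (dist_eq_norm a b).symm
    _ ≤ fdiam Q hQ := dist_le_fdiam hQ ha hb

theorem extreme_points_diameter_general
    (ε : ℝ) (hε0 : 0 < ε)
    (δ : ℝ) (hδ : δ = Real.sqrt (2 * ε))
    (P Q : Finset (EuclideanSpace ℝ (Fin 2))) (hP : P.Nonempty) (hQ : Q.Nonempty)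
    (hmax : ∀ i : ℕ, 1 ≤ i → i ≤ ⌈Real.pi / δ⌉₊ →
      ∃ q ∈ Q, ∀ p ∈ P, ⟪pt (Real.cos (i * δ)) (Real.sin (i * δ)), p⟫ ≤
        ⟪pt (Real.cos (i * δ)) (Real.sin (i * δ)), q⟫)
    (hmin : ∀ i : ℕ, 1 ≤ i → i ≤ ⌈Real.pi / δ⌉₊ →
      ∃ q ∈ Q, ∀ p ∈ P, ⟪pt (Real.cos (i * δ)) (Real.sin (i * δ)), q⟫ ≤
        ⟪pt (Real.cos (i * δ)) (Real.sin (i * δ)), p⟫) :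
    fdiam Q hQ ≥ (1 - ε) * fdiam P hP := by
  have hδ0 : 0 < δ := hδ ▸ Real.sqrt_pos.2 (by positivity)
  have hε : ε = δ ^ 2 / 2 := by rw [hδ, sq_sqrt (by positivity)]; ring
  obtain ⟨p, hp, q, hq, hpq⟩ := exists_fdiam_eq_dist P hP
  obtain ⟨θ, ⟨hθ0, hθπ⟩, hθ⟩ := exists_abs_inner_pt_cos_sin_eq (p - q)
  set i := ⌈θ / δ⌉₊
  have hi1 : 1 ≤ i := Nat.one_le_ceil_iff.2 (div_pos hθ0 hδ0)
  have hiπ : i ≤ ⌈π / δ⌉₊ := Nat.ceil_mono (div_le_div_of_nonneg_right hθπ hδ0.le)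
  rw [ge_iff_le, hpq, dist_eq_norm, hε]
  calc (1 - δ ^ 2 / 2) * ‖p - q‖ ≤ |cos (i * δ - θ)| * ‖p - q‖ :=
        mul_le_mul_of_nonneg_right
          (one_sub_sq_div_two_le_abs_cos_ceil_div_mul_sub hθ0.le hδ0) (norm_nonneg _)
    _ = |⟪pt (cos (i * δ)) (sin (i * δ)), p - q⟫| := by rw [hθ, mul_comm]
    _ ≤ fdiam Q hQ :=
        abs_inner_sub_le_fdiam hQ (norm_pt_cos_sin _).le (hmax i hi1 hiπ) (hmin i hi1 hiπ) hp hq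

theorem extreme_points_diameter
    (ε : ℝ) (hε0 : 0 < ε) (hε1 : ε < 1)
    (δ : ℝ) (hδ : δ = Real.sqrt (2 * ε))
    (P Q : Finset (EuclideanSpace ℝ (Fin 2))) (hP : P.Nonempty) (hQ : Q.Nonempty)
    (hQP : Q ⊆ P)
    (hmax : ∀ i : ℕ, 1 ≤ i → i ≤ ⌈Real.pi / δ⌉₊ →
      ∃ q ∈ Q, ∀ p ∈ P, ⟪pt (Real.cos (i * δ)) (Real.sin (i * δ)), p⟫ ≤
        ⟪pt (Real.cos (i * δ)) (Real.sin (i * δ)), q⟫)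
    (hmin : ∀ i : ℕ, 1 ≤ i → i ≤ ⌈Real.pi / δ⌉₊ →
      ∃ q ∈ Q, ∀ p ∈ P, ⟪pt (Real.cos (i * δ)) (Real.sin (i * δ)), q⟫ ≤
        ⟪pt (Real.cos (i * δ)) (Real.sin (i * δ)), p⟫) :
    fdiam Q hQ ≥ (1 - ε) * fdiam P hP :=
  extreme_points_diameter_general ε hε0 δ hδ P Q hP hQ hmax hmin
end

section
/- Let n ≥ 2 and let a, b ∈ {0,1}ⁿ. Define 3n points of ℝ²: for 1 ≤ i ≤ n, w_i = (2i, a_i) and u_i = (2i, 3 − b_i); for 1 ≤ i ≤ ⌊n/2⌋, h_i = (2(i+n), 0), and for ⌊n/2⌋ < i ≤ n, h_i = (2(i+n), 3). Then all 3n points are distinct, and the minimum Euclidean distance between two distinct points of this set equals 1 if there exists an index i with a_i = 1 and b_i = 1, and is at least 2 otherwise. -/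
open Real

lemma dist_pt (x1 y1 x2 y2 : ℝ) :
    dist (pt x1 y1) (pt x2 y2) = Real.sqrt ((x1 - x2) ^ 2 + (y1 - y2) ^ 2) := by
  rw [EuclideanSpace.dist_eq]
  congr 1
  simp [pt, Fin.sum_univ_two, Real.dist_eq, sq_abs]

lemma le_dist_pt_x (x1 y1 x2 y2 : ℝ) (h : 2 ≤ |x1 - x2|) :
    2 ≤ dist (pt x1 y1) (pt x2 y2) := by
  rw [dist_pt]
  have h4 : (4:ℝ) ≤ (x1 - x2) ^ 2 + (y1 - y2) ^ 2 := by
    nlinarith [sq_nonneg (y1 - y2), sq_abs (x1 - x2)]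
  calc (2:ℝ) = Real.sqrt 4 := by rw [show (4:ℝ) = 2^2 by norm_num, Real.sqrt_sq]; norm_num
  _ ≤ _ := Real.sqrt_le_sqrt h4

lemma sep1 {n : ℕ} (i j : Fin n) (h : i ≠ j) :
    2 ≤ |2 * ((i:ℝ) + 1) - 2 * ((j:ℝ) + 1)| := by
  have h' : (i:ℤ) ≠ (j:ℤ) := by
    simpa [Fin.ext_iff] using h
  have h1 : 1 ≤ |(i:ℤ) - (j:ℤ)| := Int.one_le_abs (by omega)
  have h2 : (1:ℝ) ≤ |(i:ℝ) - (j:ℝ)| := by exact_mod_cast (by push_cast at h1 ⊢; exact_mod_cast h1 : (1:ℝ) ≤ |((i:ℤ):ℝ) - ((j:ℤ):ℝ)|)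
  rw [show 2 * ((i:ℝ) + 1) - 2 * ((j:ℝ) + 1) = 2 * ((i:ℝ) - (j:ℝ)) by ring, abs_mul]
  rw [abs_of_nonneg (by norm_num : (0:ℝ) ≤ 2)]
  linarith

lemma sep2 {n : ℕ} (i j : Fin n) :
    2 ≤ |2 * ((i:ℝ) + 1) - 2 * ((j:ℝ) + 1 + n)| := by
  have hi : (i:ℝ) + 1 ≤ n := by exact_mod_cast i.isLt
  have hj : (0:ℝ) ≤ (j:ℝ) := by positivity
  rw [le_abs]
  right
  linarith

theorem closest_pair_reduction
    (n : ℕ) (hn : 2 ≤ n)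
    (a b : Fin n → ℝ)
    (ha : ∀ i, a i = 0 ∨ a i = 1) (hb : ∀ i, b i = 0 ∨ b i = 1)
    (pts : Fin n ⊕ Fin n ⊕ Fin n → EuclideanSpace ℝ (Fin 2))
    (hw : ∀ i : Fin n, pts (Sum.inl i) = pt (2 * ((i : ℝ) + 1)) (a i))
    (hu : ∀ i : Fin n, pts (Sum.inr (Sum.inl i)) = pt (2 * ((i : ℝ) + 1)) (3 - b i))
    (hh : ∀ i : Fin n, pts (Sum.inr (Sum.inr i)) =
      if (i : ℕ) + 1 ≤ n / 2 then pt (2 * ((i : ℝ) + 1 + n)) 0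
      else pt (2 * ((i : ℝ) + 1 + n)) 3) :
    Function.Injective pts ∧
    ((∃ i, a i = 1 ∧ b i = 1) →
      ((∃ j k, j ≠ k ∧ dist (pts j) (pts k) = 1) ∧
        ∀ j k, j ≠ k → 1 ≤ dist (pts j) (pts k))) ∧
    ((¬ ∃ i, a i = 1 ∧ b i = 1) →
      ∀ j k, j ≠ k → 2 ≤ dist (pts j) (pts k)) := by
  -- distance between w_i and u_i
  have hwu : ∀ i : Fin n, dist (pts (Sum.inl i)) (pts (Sum.inr (Sum.inl i))) = 3 - a i - b i := by
    intro i
    have ha1 : a i ≤ 1 := by rcases ha i with h | h <;> simp [h]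
    have hb1 : b i ≤ 1 := by rcases hb i with h | h <;> simp [h]
    rw [hw, hu, dist_pt]
    rw [show (2 * ((i:ℝ) + 1) - 2 * ((i:ℝ) + 1)) ^ 2 + (a i - (3 - b i)) ^ 2
        = (3 - a i - b i) ^ 2 by ring]
    rw [Real.sqrt_sq (by linarith)]
  -- all other distinct pairs are at distance ≥ 2
  have key : ∀ j k, j ≠ k →
      2 ≤ dist (pts j) (pts k) ∨
      ∃ i, (j = Sum.inl i ∧ k = Sum.inr (Sum.inl i)) ∨
           (j = Sum.inr (Sum.inl i) ∧ k = Sum.inl i) := by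
    rintro (i | i | i) (i' | i' | i') hjk
    · left
      rw [hw, hw]
      exact le_dist_pt_x _ _ _ _ (sep1 i i' (by simpa using hjk))
    · by_cases h : i = i'
      · right; exact ⟨i, Or.inl ⟨rfl, by rw [h]⟩⟩
      · left
        rw [hw, hu]
        exact le_dist_pt_x _ _ _ _ (sep1 i i' h)
    · left
      rw [hw, hh]
      split_ifs <;> exact le_dist_pt_x _ _ _ _ (sep2 i i')
    · by_cases h : i = i'
      · right; exact ⟨i', Or.inr ⟨by rw [h], rfl⟩⟩
      · left
        rw [hu, hw]
        exact le_dist_pt_x _ _ _ _ (sep1 i i' h)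
    · left
      rw [hu, hu]
      exact le_dist_pt_x _ _ _ _ (sep1 i i' (by simpa using hjk))
    · left
      rw [hu, hh]
      split_ifs <;> exact le_dist_pt_x _ _ _ _ (sep2 i i')
    · left
      rw [hh, hw]
      split_ifs <;>
        exact le_dist_pt_x _ _ _ _ (by rw [abs_sub_comm]; exact sep2 i' i)
    · left
      rw [hh, hu]
      split_ifs <;>
        exact le_dist_pt_x _ _ _ _ (by rw [abs_sub_comm]; exact sep2 i' i)
    · left
      rw [hh, hh]
      have hne : i ≠ i' := by simpa using hjk
      split_ifs <;>
        exact le_dist_pt_x _ _ _ _ (by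
          have := sep1 i i' hne
          convert this using 2 <;> ring)
  -- all distinct pairs at distance ≥ 1
  have one_le : ∀ j k, j ≠ k → 1 ≤ dist (pts j) (pts k) := by
    intro j k hjk
    rcases key j k hjk with h | ⟨i, ⟨hj, hk⟩ | ⟨hj, hk⟩⟩
    · linarith
    · subst hj; subst hk
      rw [hwu i]
      have ha1 : a i ≤ 1 := by rcases ha i with h | h <;> simp [h]
      have hb1 : b i ≤ 1 := by rcases hb i with h | h <;> simp [h]
      linarith
    · subst hj; subst hk
      rw [dist_comm, hwu i]
      have ha1 : a i ≤ 1 := by rcases ha i with h | h <;> simp [h]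
      have hb1 : b i ≤ 1 := by rcases hb i with h | h <;> simp [h]
      linarith
  refine ⟨?_, ?_, ?_⟩
  · intro j k h
    by_contra hne
    have := one_le j k hne
    rw [h] at this
    simp at this
    linarith
  · rintro ⟨i, hai, hbi⟩
    refine ⟨⟨Sum.inl i, Sum.inr (Sum.inl i), by simp, ?_⟩, one_le⟩
    rw [hwu i, hai, hbi]; norm_num
  · intro hno j k hjk
    rcases key j k hjk with h | ⟨i, ⟨hj, hk⟩ | ⟨hj, hk⟩⟩
    · exact h
    all_goals {
      have hsum : a i + b i ≤ 1 := by
        rcases ha i with h1 | h1 <;> rcases hb i with h2 | h2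
        · rw [h1, h2]; norm_num
        · rw [h1, h2]; norm_num
        · rw [h1, h2]; norm_num
        · exact absurd (⟨i, h1, h2⟩ : ∃ i, a i = 1 ∧ b i = 1) hno
      subst hj; subst hk
      first
      | (rw [hwu i]; linarith)
      | (rw [dist_comm, hwu i]; linarith)
    }
end

section
/- Let n ≥ 2, let k > 1 be a real number, and let a, b ∈ {0,1}ⁿ. Define 3n points of ℝ²: for 1 ≤ i ≤ n, w_i = (k·i, k·a_i) and u_i = (k·i, (2k+1) − k·b_i); for 1 ≤ i ≤ ⌊n/2⌋, h_i = (k(i+n), 0), and for ⌊n/2⌋ < i ≤ n, h_i = (k(i+n), 2k+1). Then the minimum Euclidean distance between two distinct points of this set equals 1 if there exists an index i with a_i = 1 and b_i = 1, and is at least k otherwise. -/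
open Real

lemma dist_pt_s9 (x y x' y' : ℝ) :
    dist (pt x y) (pt x' y') = Real.sqrt ((x - x') ^ 2 + (y - y') ^ 2) := by
  rw [EuclideanSpace.dist_eq]
  simp [pt, Fin.sum_univ_two, Real.dist_eq, sq_abs]

lemma x_le_dist (x y x' y' : ℝ) : |x - x'| ≤ dist (pt x y) (pt x' y') := by
  rw [dist_pt_s9, ← Real.sqrt_sq_eq_abs]
  exact Real.sqrt_le_sqrt (by nlinarith [sq_nonneg (y - y')])

lemma dist_pt_same_x (x y y' : ℝ) : dist (pt x y) (pt x y') = |y - y'| := by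
  rw [dist_pt_s9]
  simp [sub_self, Real.sqrt_sq_eq_abs]

theorem closest_pair_spread_reduction
    (n : ℕ) (hn : 2 ≤ n) (k : ℝ) (hk : 1 < k)
    (a b : Fin n → ℝ)
    (ha : ∀ i, a i = 0 ∨ a i = 1) (hb : ∀ i, b i = 0 ∨ b i = 1)
    (pts : Fin n ⊕ Fin n ⊕ Fin n → EuclideanSpace ℝ (Fin 2))
    (hw : ∀ i : Fin n, pts (Sum.inl i) = pt (k * ((i : ℝ) + 1)) (k * a i))
    (hu : ∀ i : Fin n, pts (Sum.inr (Sum.inl i)) =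
      pt (k * ((i : ℝ) + 1)) ((2 * k + 1) - k * b i))
    (hh : ∀ i : Fin n, pts (Sum.inr (Sum.inr i)) =
      if (i : ℕ) + 1 ≤ n / 2 then pt (k * ((i : ℝ) + 1 + n)) 0
      else pt (k * ((i : ℝ) + 1 + n)) (2 * k + 1)) :
    ((∃ i, a i = 1 ∧ b i = 1) →
      ((∃ j k', j ≠ k' ∧ dist (pts j) (pts k') = 1) ∧
        ∀ j k', j ≠ k' → 1 ≤ dist (pts j) (pts k'))) ∧
    ((¬ ∃ i, a i = 1 ∧ b i = 1) →
      ∀ j k', j ≠ k' → k ≤ dist (pts j) (pts k')) := by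
  have hk0 : (0:ℝ) < k := by linarith
  have ha1 : ∀ i, a i ≤ 1 := fun i => by rcases ha i with h | h <;> linarith
  have hb1 : ∀ i, b i ≤ 1 := fun i => by rcases hb i with h | h <;> linarith
  have ha0 : ∀ i, 0 ≤ a i := fun i => by rcases ha i with h | h <;> linarith
  have hb0 : ∀ i, 0 ≤ b i := fun i => by rcases hb i with h | h <;> linarith
  -- generic gap lemmas
  have kgap : ∀ x y : ℝ, 1 ≤ |x - y| → k ≤ |k * x - k * y| := by
    intro x y h
    rw [← mul_sub, abs_mul, abs_of_pos hk0]
    nlinarith [abs_nonneg (x - y)]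
  have natgap : ∀ i m : ℕ, i ≠ m → (1:ℝ) ≤ |(i:ℝ) - m| := by
    intro i m him
    have hz : ((i:ℤ) - m) ≠ 0 := sub_ne_zero.mpr (by exact_mod_cast him)
    have h1 := Int.one_le_abs hz
    have h2 : ((1:ℤ):ℝ) ≤ ((|(i:ℤ) - m| : ℤ) : ℝ) := by exact_mod_cast h1
    push_cast at h2
    linarith
  -- the third block of points, with unknown y coordinate
  have hxh : ∀ i : Fin n, ∃ c : ℝ, pts (Sum.inr (Sum.inr i)) = pt (k * ((i:ℝ) + 1 + n)) c := by
    intro i; rw [hh i]; split_ifs <;> exact ⟨_, rfl⟩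
  -- index bound
  have hilt : ∀ i : Fin n, (i:ℝ) + 1 ≤ n := by
    intro i; exact_mod_cast i.isLt
  -- gap between a w/u column and an h column
  have gapwh : ∀ i m : Fin n, k ≤ |k * ((i:ℝ) + 1) - k * ((m:ℝ) + 1 + (n:ℝ))| := by
    intro i m
    apply kgap
    have h1 := hilt i
    have h2 : (0:ℝ) ≤ (m:ℝ) := Nat.cast_nonneg _
    rw [abs_sub_comm, abs_of_nonneg (by linarith)]
    linarith
  -- gap between two distinct w/u columns
  have gapww : ∀ i m : Fin n, i ≠ m → k ≤ |k * ((i:ℝ) + 1) - k * ((m:ℝ) + 1)| := by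
    intro i m him
    apply kgap
    have := natgap i m (Fin.val_ne_of_ne him)
    calc (1:ℝ) ≤ |(i:ℝ) - m| := this
    _ = |((i:ℝ) + 1) - ((m:ℝ) + 1)| := by congr 1; ring
  -- gap between two distinct h columns
  have gaphh : ∀ i m : Fin n, i ≠ m → k ≤ |k * ((i:ℝ) + 1 + n) - k * ((m:ℝ) + 1 + n)| := by
    intro i m him
    apply kgap
    have := natgap i m (Fin.val_ne_of_ne him)
    calc (1:ℝ) ≤ |(i:ℝ) - m| := this
    _ = |((i:ℝ) + 1 + n) - ((m:ℝ) + 1 + n)| := by congr 1; ring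
  -- distance between w i and u i
  have duw : ∀ i : Fin n,
      dist (pts (Sum.inl i)) (pts (Sum.inr (Sum.inl i))) = 2 * k + 1 - k * (a i + b i) := by
    intro i
    rw [hw i, hu i, dist_pt_same_x]
    have h1 := ha1 i
    have h2 := hb1 i
    rw [abs_of_nonpos (by nlinarith)]
    ring
  -- the key dichotomy
  have key : ∀ j j', j ≠ j' → k ≤ dist (pts j) (pts j') ∨
      ∃ i : Fin n, dist (pts j) (pts j') = 2 * k + 1 - k * (a i + b i) := by
    intro j j' hjj'
    rcases j with i | i | i <;> rcases j' with m | m | m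
    · left
      have him : i ≠ m := fun h => hjj' (by rw [h])
      rw [hw i, hw m]
      exact le_trans (gapww i m him) (x_le_dist _ _ _ _)
    · by_cases him : i = m
      · subst him
        right
        exact ⟨i, duw i⟩
      · left
        rw [hw i, hu m]
        exact le_trans (gapww i m him) (x_le_dist _ _ _ _)
    · left
      obtain ⟨c, hc⟩ := hxh m
      rw [hw i, hc]
      exact le_trans (gapwh i m) (x_le_dist _ _ _ _)
    · by_cases him : i = m
      · subst him
        right
        exact ⟨i, by rw [dist_comm]; exact duw i⟩
      · left
        rw [hu i, hw m]
        exact le_trans (gapww i m him) (x_le_dist _ _ _ _)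
    · left
      have him : i ≠ m := fun h => hjj' (by rw [h])
      rw [hu i, hu m]
      exact le_trans (gapww i m him) (x_le_dist _ _ _ _)
    · left
      obtain ⟨c, hc⟩ := hxh m
      rw [hu i, hc]
      exact le_trans (gapwh i m) (x_le_dist _ _ _ _)
    · left
      obtain ⟨c, hc⟩ := hxh i
      rw [dist_comm, hw m, hc]
      exact le_trans (gapwh m i) (x_le_dist _ _ _ _)
    · left
      obtain ⟨c, hc⟩ := hxh i
      rw [dist_comm, hu m, hc]
      exact le_trans (gapwh m i) (x_le_dist _ _ _ _)
    · left
      have him : i ≠ m := fun h => hjj' (by rw [h])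
      obtain ⟨c, hc⟩ := hxh i
      obtain ⟨c', hc'⟩ := hxh m
      rw [hc, hc']
      exact le_trans (gaphh i m him) (x_le_dist _ _ _ _)
  constructor
  · rintro ⟨i, hai, hbi⟩
    constructor
    · refine ⟨Sum.inl i, Sum.inr (Sum.inl i), by simp, ?_⟩
      rw [duw i, hai, hbi]
      ring
    · intro j j' hjj'
      rcases key j j' hjj' with h | ⟨i', h⟩
      · linarith
      · have h1 := ha1 i'
        have h2 := hb1 i'
        rw [h]
        nlinarith
  · intro hno j j' hjj'
    rcases key j j' hjj' with h | ⟨i', h⟩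
    · exact h
    · have hab : a i' + b i' ≤ 1 := by
        rcases ha i' with h1 | h1 <;> rcases hb i' with h2 | h2 <;>
          first
            | linarith
            | exact absurd ⟨i', h1, h2⟩ hno
      rw [h]
      nlinarith
end

section
/- Let n ≥ 1 and 0 < r < R. For i = 0, 1, …, n−1 let θ_i = iπ/n, and let ρ_i, σ_i ∈ {r, R}. Define points w_i = ρ_i·(cos θ_i, sin θ_i) and u_i = −σ_i·(cos θ_i, sin θ_i) in ℝ², and let H be any finite subset of the closed disc of radius r centered at the origin. Then the maximum Euclidean distance between two points of the set {w_0,…,w_{n−1}} ∪ {u_0,…,u_{n−1}} ∪ H equals 2R if and only if there exists an index i with ρ_i = R and σ_i = R. -/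
open Real

/-!
Every point of the configuration has norm at most `R`, so its diameter is at most `2R`, and
two points at distance exactly `2R` are antipodal of norm `R`. Points of norm `R` lie on the
lines, not in `H`. Since the angles `iπ/n` lie in `[0, π)`, two antipodal points on the lines
must be the upper and lower point of the same line `L_i`, both at distance `R`.
-/

lemma norm_smul_pt_cos_sin (a x : ℝ) : ‖a • pt (cos x) (sin x)‖ = |a| := by
  rw [norm_smul, EuclideanSpace.norm_eq]
  simp [Fin.sum_univ_two, pt, sq_abs]

lemma norm_eq_and_eq_neg_of_dist_eq_two_mul {E : Type*} [NormedAddCommGroup E]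
    [InnerProductSpace ℝ E] {p q : E} {R : ℝ} (hp : ‖p‖ ≤ R) (hq : ‖q‖ ≤ R)
    (h : dist p q = 2 * R) : ‖p‖ = R ∧ q = -p := by
  have hpR : ‖p‖ = R := by linarith [dist_le_norm_add_norm p q]
  have hqR : ‖q‖ = R := by linarith [dist_le_norm_add_norm p q]
  have hsum : ‖p + q‖ * ‖p + q‖ = 0 := by
    have := parallelogram_law_with_norm ℝ p q
    rw [← dist_eq_norm, h, hpR, hqR] at this
    linarith
  refine ⟨hpR, eq_neg_of_add_eq_zero_right (norm_eq_zero.mp (mul_self_eq_zero.mp hsum))⟩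

lemma smul_pt_cos_sin_inj {θ φ a b : ℝ} (hθ : θ ∈ Set.Ico 0 π) (hφ : φ ∈ Set.Ico 0 π)
    (ha : a ≠ 0) (h : a • pt (cos θ) (sin θ) = b • pt (cos φ) (sin φ)) : θ = φ ∧ a = b := by
  have hcos : a * cos θ = b * cos φ := by simpa [pt] using congrArg (· 0) h
  have hsin : a * sin θ = b * sin φ := by simpa [pt] using congrArg (· 1) h
  have hab : |a| = |b| := by
    simpa only [norm_smul_pt_cos_sin] using congrArg norm h
  rcases abs_eq_abs.mp hab with rfl | hb
  · exact ⟨injOn_cos (Set.Ico_subset_Icc_self hθ) (Set.Ico_subset_Icc_self hφ)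
      (mul_left_cancel₀ ha hcos), rfl⟩
  obtain rfl : b = -a := by rw [hb, neg_neg]
  exfalso
  -- both sines are nonnegative and sum to zero, so both angles are `0`
  have hsθ := sin_nonneg_of_nonneg_of_le_pi hθ.1 hθ.2.le
  have hsφ := sin_nonneg_of_nonneg_of_le_pi hφ.1 hφ.2.le
  have hsum : sin θ + sin φ = 0 :=
    (mul_eq_zero.mp (by linear_combination hsin : a * (sin θ + sin φ) = 0)).resolve_left ha
  have hθ0 : θ = 0 :=
    (sin_eq_zero_iff_of_lt_of_lt (by linarith [hθ.1, pi_pos]) hθ.2).mp (by linarith)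
  have hφ0 : φ = 0 :=
    (sin_eq_zero_iff_of_lt_of_lt (by linarith [hφ.1, pi_pos]) hφ.2).mp (by linarith)
  rw [hθ0, hφ0, cos_zero] at hcos
  exact ha (by linarith)

lemma cast_mul_pi_div_mem_Ico {n : ℕ} (i : Fin n) : (i : ℝ) * π / n ∈ Set.Ico 0 π := by
  have hn : (0 : ℝ) < n := by exact_mod_cast i.pos
  refine ⟨by positivity, ?_⟩
  rw [div_lt_iff₀ hn, mul_comm π]
  exact mul_lt_mul_of_pos_right (by exact_mod_cast i.2) pi_pos

lemma cast_mul_pi_div_injective {n : ℕ} : Function.Injective fun i : Fin n => (i : ℝ) * π / n := by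
  intro i j h
  have hn : (n : ℝ) ≠ 0 := by exact_mod_cast i.pos.ne'
  simp only [div_left_inj' hn, mul_left_inj' pi_ne_zero, Nat.cast_inj] at h
  exact Fin.ext h

lemma eq_and_eq_abs_of_neg_smul_eq_smul {n : ℕ} {ρ σ : Fin n → ℝ} (hρ : ∀ i, 0 < ρ i)
    (hσ : ∀ i, 0 < σ i) {i j : Fin n} {a b : ℝ} (ha : a = ρ i ∨ a = -σ i)
    (hb : b = ρ j ∨ b = -σ j)
    (h : -(a • pt (cos ((i : ℝ) * π / n)) (sin ((i : ℝ) * π / n))) =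
      b • pt (cos ((j : ℝ) * π / n)) (sin ((j : ℝ) * π / n))) :
    i = j ∧ ρ i = |a| ∧ σ i = |a| := by
  have ha0 : -a ≠ 0 := by rcases ha with rfl | rfl <;> simp [(hρ i).ne', (hσ i).ne']
  rw [← neg_smul] at h
  obtain ⟨hij, rfl⟩ := smul_pt_cos_sin_inj (cast_mul_pi_div_mem_Ico i)
    (cast_mul_pi_div_mem_Ico j) ha0 h
  obtain rfl := cast_mul_pi_div_injective hij
  -- `a` and `-a` are both among `ρ i > 0` and `-σ i < 0`, so they are these two in some order
  have := hρ i
  have := hσ i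
  refine ⟨rfl, ?_, ?_⟩ <;> rcases abs_cases a with h | h <;> rcases ha with ha | ha <;>
    rcases hb with hb | hb <;> linarith

theorem diameter_reduction_general
    (n : ℕ) (r R : ℝ) (hr : 0 < r) (hrR : r < R)
    (ρ σ : Fin n → ℝ)
    (hρ : ∀ i, ρ i = r ∨ ρ i = R) (hσ : ∀ i, σ i = r ∨ σ i = R)
    (w u : Fin n → EuclideanSpace ℝ (Fin 2))
    (hw : ∀ i : Fin n, w i = ρ i • pt (Real.cos ((i : ℝ) * Real.pi / n))
      (Real.sin ((i : ℝ) * Real.pi / n)))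
    (hu : ∀ i : Fin n, u i = -(σ i) • pt (Real.cos ((i : ℝ) * Real.pi / n))
      (Real.sin ((i : ℝ) * Real.pi / n)))
    (H : Finset (EuclideanSpace ℝ (Fin 2)))
    (hH : (H : Set (EuclideanSpace ℝ (Fin 2))) ⊆ Metric.closedBall 0 r)
    (S : Set (EuclideanSpace ℝ (Fin 2)))
    (hS : S = Set.range w ∪ Set.range u ∪ (H : Set (EuclideanSpace ℝ (Fin 2)))) :
    IsGreatest {d : ℝ | ∃ p ∈ S, ∃ q ∈ S, d = dist p q} (2 * R) ↔
      ∃ i, ρ i = R ∧ σ i = R := by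
  have bounds : ∀ x, x = r ∨ x = R → 0 < x ∧ x ≤ R := by
    rintro x (rfl | rfl) <;> constructor <;> linarith
  have radial : ∀ p ∈ Set.range w ∪ Set.range u, ∃ i c, (c = ρ i ∨ c = -σ i) ∧
      p = c • pt (cos ((i : ℝ) * π / n)) (sin ((i : ℝ) * π / n)) := by
    rintro p (⟨i, rfl⟩ | ⟨i, rfl⟩)
    · exact ⟨i, ρ i, .inl rfl, hw i⟩
    · exact ⟨i, -σ i, .inr rfl, hu i⟩
  have norm_le_r : ∀ p ∈ H, ‖p‖ ≤ r := fun p hp => by simpa using hH hp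
  have norm_le : ∀ p ∈ S, ‖p‖ ≤ R := by
    rw [hS]
    rintro p (hp | hp)
    · obtain ⟨i, c, hc, rfl⟩ := radial p hp
      have := bounds _ (hρ i)
      have := bounds _ (hσ i)
      rw [norm_smul_pt_cos_sin, abs_le]
      rcases hc with rfl | rfl <;> constructor <;> linarith
    · linarith [norm_le_r p hp]
  have mem_radial : ∀ p ∈ S, ‖p‖ = R → p ∈ Set.range w ∪ Set.range u := by
    rw [hS]
    rintro p (hp | hp) hpR
    · exact hp
    · linarith [norm_le_r p hp]
  constructor
  · rintro ⟨⟨p, hp, q, hq, hpq⟩, -⟩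
    obtain ⟨hpR, rfl⟩ :=
      norm_eq_and_eq_neg_of_dist_eq_two_mul (norm_le p hp) (norm_le q hq) hpq.symm
    obtain ⟨i, a, ha, rfl⟩ := radial _ (mem_radial _ hp hpR)
    obtain ⟨j, b, hb, hab⟩ := radial _ (mem_radial _ hq (by rw [norm_neg, hpR]))
    obtain ⟨-, hρi, hσi⟩ := eq_and_eq_abs_of_neg_smul_eq_smul (fun i => (bounds _ (hρ i)).1)
      (fun i => (bounds _ (hσ i)).1) ha hb hab
    rw [norm_smul_pt_cos_sin] at hpR
    exact ⟨i, hρi.trans hpR, hσi.trans hpR⟩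
  · rintro ⟨i, hρi, hσi⟩
    have hS_w : w i ∈ S := by rw [hS]; exact .inl (.inl ⟨i, rfl⟩)
    have hS_u : u i ∈ S := by rw [hS]; exact .inl (.inr ⟨i, rfl⟩)
    refine ⟨⟨w i, hS_w, u i, hS_u, ?_⟩, ?_⟩
    · rw [dist_eq_norm, hw, hu, ← sub_smul, norm_smul_pt_cos_sin, hρi, hσi, sub_neg_eq_add,
        abs_of_pos (by linarith), two_mul]
    · rintro d ⟨p, hp, q, hq, rfl⟩
      linarith [dist_le_norm_add_norm p q, norm_le p hp, norm_le q hq]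

theorem diameter_reduction
    (n : ℕ) (hn : 1 ≤ n) (r R : ℝ) (hr : 0 < r) (hrR : r < R)
    (ρ σ : Fin n → ℝ)
    (hρ : ∀ i, ρ i = r ∨ ρ i = R) (hσ : ∀ i, σ i = r ∨ σ i = R)
    (w u : Fin n → EuclideanSpace ℝ (Fin 2))
    (hw : ∀ i : Fin n, w i = ρ i • pt (Real.cos ((i : ℝ) * Real.pi / n))
      (Real.sin ((i : ℝ) * Real.pi / n)))
    (hu : ∀ i : Fin n, u i = -(σ i) • pt (Real.cos ((i : ℝ) * Real.pi / n))
      (Real.sin ((i : ℝ) * Real.pi / n)))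
    (H : Finset (EuclideanSpace ℝ (Fin 2)))
    (hH : (H : Set (EuclideanSpace ℝ (Fin 2))) ⊆ Metric.closedBall 0 r)
    (S : Set (EuclideanSpace ℝ (Fin 2)))
    (hS : S = Set.range w ∪ Set.range u ∪ (H : Set (EuclideanSpace ℝ (Fin 2)))) :
    IsGreatest {d : ℝ | ∃ p ∈ S, ∃ q ∈ S, d = dist p q} (2 * R) ↔
      ∃ i, ρ i = R ∧ σ i = R :=
  diameter_reduction_general n r R hr hrR ρ σ hρ hσ w u hw hu H hH S hS
end

section
/- Let n ≥ 1 and 0 < r < R. For i = 0, 1, …, n−1 let θ_i = iπ/n, and let ρ_i, σ_i ∈ {r, R}. Define points w_i = ρ_i·(cos θ_i, sin θ_i) and u_i = −σ_i·(cos θ_i, sin θ_i) in ℝ², and let H be any finite subset of the closed disc of radius r centered at the origin. If there is no index i with ρ_i = R and σ_i = R, then every pair of points of {w_0,…,w_{n−1}} ∪ {u_0,…,u_{n−1}} ∪ H is at Euclidean distance at most max(2R·cos(π/(2n)), R + r). -/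
open Real

lemma dist_sq_pt (a b α β : ℝ) :
    dist (a • pt (Real.cos α) (Real.sin α)) (b • pt (Real.cos β) (Real.sin β)) ^ 2
      = a^2 + b^2 - 2*a*b*Real.cos (α - β) := by
  rw [EuclideanSpace.dist_eq]
  rw [Real.sq_sqrt (by positivity)]
  simp [pt, Real.dist_eq, Fin.sum_univ_two, sq_abs, Real.cos_sub]
  nlinarith [Real.sin_sq_add_cos_sq α, Real.sin_sq_add_cos_sq β]

lemma norm_smul_pt (a α : ℝ) : ‖a • pt (Real.cos α) (Real.sin α)‖ = |a| := by
  rw [norm_smul, EuclideanSpace.norm_eq]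
  simp [pt, Fin.sum_univ_two, sq_abs]

lemma absdiff_le (n : ℕ) (hn : 1 ≤ n) (i j : Fin n) :
    |(i : ℝ) * Real.pi / n - (j : ℝ) * Real.pi / n| ≤ ((n:ℝ) - 1) * (Real.pi / n) := by
  have hn0 : (0:ℝ) < n := by exact_mod_cast hn
  have hpn : (0:ℝ) ≤ Real.pi / n := by positivity
  have h : (i : ℝ) * Real.pi / n - (j : ℝ) * Real.pi / n
      = ((i:ℝ) - (j:ℝ)) * (Real.pi / n) := by ring
  rw [h, abs_mul, abs_of_nonneg hpn]
  have hi : (i:ℝ) + 1 ≤ n := by exact_mod_cast i.2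
  have hj : (j:ℝ) + 1 ≤ n := by exact_mod_cast j.2
  have hi0 : (0:ℝ) ≤ (i:ℝ) := by positivity
  have hj0 : (0:ℝ) ≤ (j:ℝ) := by positivity
  have : |(i:ℝ) - (j:ℝ)| ≤ (n:ℝ) - 1 := by
    rw [abs_sub_le_iff]; constructor <;> linarith
  exact mul_le_mul_of_nonneg_right this hpn

lemma cos_ge_aux (n : ℕ) (hn : 1 ≤ n) (x : ℝ) (hx : |x| ≤ ((n:ℝ) - 1) * (Real.pi / n)) :
    -Real.cos (Real.pi / n) ≤ Real.cos x := by
  have hn0 : (0:ℝ) < n := by exact_mod_cast hn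
  have heq : ((n:ℝ) - 1) * (Real.pi / n) = Real.pi - Real.pi / n := by
    field_simp
  rw [← Real.cos_abs x, ← Real.cos_pi_sub]
  apply Real.cos_le_cos_of_nonneg_of_le_pi (abs_nonneg x)
  · have : 0 < Real.pi / n := by positivity
    linarith [Real.pi_pos]
  · rw [← heq]; exact hx

lemma cos_le_aux (n : ℕ) (hn : 1 ≤ n) (x : ℝ) (h1 : Real.pi / n ≤ |x|) (h2 : |x| ≤ Real.pi) :
    Real.cos x ≤ Real.cos (Real.pi / n) := by
  rw [← Real.cos_abs x]
  exact Real.cos_le_cos_of_nonneg_of_le_pi (by positivity) h2 h1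

lemma big_dist (n : ℕ) (hn : 1 ≤ n) (R : ℝ) (hR : 0 ≤ R) (a b : ℝ) (i j : Fin n)
    (ha : a^2 = R^2) (hb : b^2 = R^2)
    (hab : -(R^2 * Real.cos (Real.pi / n))
      ≤ a * b * Real.cos ((i : ℝ) * Real.pi / n - (j : ℝ) * Real.pi / n)) :
    dist (a • pt (Real.cos ((i : ℝ) * Real.pi / n)) (Real.sin ((i : ℝ) * Real.pi / n)))
        (b • pt (Real.cos ((j : ℝ) * Real.pi / n)) (Real.sin ((j : ℝ) * Real.pi / n)))
      ≤ 2 * R * Real.cos (Real.pi / (2 * n)) := by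
  have hn0 : (0:ℝ) < n := by exact_mod_cast hn
  have hcosnn : 0 ≤ Real.cos (Real.pi / (2 * n)) := by
    apply Real.cos_nonneg_of_mem_Icc
    constructor
    · have : 0 ≤ Real.pi / (2 * n) := by positivity
      linarith [Real.pi_pos]
    · have hn1 : (1:ℝ) ≤ n := by exact_mod_cast hn
      rw [div_le_div_iff₀ (by positivity) (by norm_num)]
      nlinarith [Real.pi_pos]
  have hRHS : 0 ≤ 2 * R * Real.cos (Real.pi / (2 * n)) := by positivity
  refine le_of_pow_le_pow_left₀ two_ne_zero hRHS ?_
  rw [dist_sq_pt]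
  have h2n : 2 * (Real.pi / (2 * (n:ℝ))) = Real.pi / n := by field_simp
  have hsq := Real.cos_sq (Real.pi / (2 * n))
  rw [h2n] at hsq
  nlinarith [hab, ha, hb]

theorem diameter_gap
    (n : ℕ) (hn : 1 ≤ n) (r R : ℝ) (hr : 0 < r) (hrR : r < R)
    (ρ σ : Fin n → ℝ)
    (hρ : ∀ i, ρ i = r ∨ ρ i = R) (hσ : ∀ i, σ i = r ∨ σ i = R)
    (w u : Fin n → EuclideanSpace ℝ (Fin 2))
    (hw : ∀ i : Fin n, w i = ρ i • pt (Real.cos ((i : ℝ) * Real.pi / n))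
      (Real.sin ((i : ℝ) * Real.pi / n)))
    (hu : ∀ i : Fin n, u i = -(σ i) • pt (Real.cos ((i : ℝ) * Real.pi / n))
      (Real.sin ((i : ℝ) * Real.pi / n)))
    (H : Finset (EuclideanSpace ℝ (Fin 2)))
    (hH : (H : Set (EuclideanSpace ℝ (Fin 2))) ⊆ Metric.closedBall 0 r)
    (S : Set (EuclideanSpace ℝ (Fin 2)))
    (hS : S = Set.range w ∪ Set.range u ∪ (H : Set (EuclideanSpace ℝ (Fin 2))))
    (hdisj : ¬ ∃ i, ρ i = R ∧ σ i = R) :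
    ∀ p ∈ S, ∀ q ∈ S,
      dist p q ≤ max (2 * R * Real.cos (Real.pi / (2 * n))) (R + r) := by
  have hn0 : (0:ℝ) < n := by exact_mod_cast hn
  have hR0 : (0:ℝ) < R := lt_trans hr hrR
  -- classification of points of S
  have classify : ∀ p ∈ S, ‖p‖ ≤ r ∨ ∃ i : Fin n, ∃ a : ℝ,
      p = a • pt (Real.cos ((i : ℝ) * Real.pi / n)) (Real.sin ((i : ℝ) * Real.pi / n)) ∧
      ((a = R ∧ ρ i = R) ∨ (a = -R ∧ σ i = R)) := by
    intro p hp
    rw [hS] at hp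
    rcases hp with (⟨i, rfl⟩ | ⟨i, rfl⟩) | hp
    · rcases hρ i with h | h
      · left; rw [hw i, h, norm_smul_pt, abs_of_pos hr]
      · right; exact ⟨i, R, by rw [hw i, h], Or.inl ⟨rfl, h⟩⟩
    · rcases hσ i with h | h
      · left; rw [hu i, h, norm_smul_pt, abs_neg, abs_of_pos hr]
      · right; exact ⟨i, -R, by rw [hu i, h], Or.inr ⟨rfl, h⟩⟩
    · left
      have := hH hp
      rwa [Metric.mem_closedBall, dist_zero_right] at this
  have normS : ∀ p ∈ S, ‖p‖ ≤ R := by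
    intro p hp
    rcases classify p hp with h | ⟨i, a, rfl, hflag⟩
    · linarith
    · rw [norm_smul_pt]
      rcases hflag with ⟨rfl, -⟩ | ⟨rfl, -⟩ <;> simp [abs_of_pos hR0]
  intro p hp q hq
  rcases classify p hp with hps | ⟨i, a, rfl, hpf⟩
  · -- p small
    refine le_trans (le_trans (dist_le_norm_add_norm p q) ?_) (le_max_right _ _)
    have := normS q hq
    linarith
  rcases classify q hq with hqs | ⟨j, b, rfl, hqf⟩
  · -- q small
    refine le_trans (le_trans (dist_le_norm_add_norm _ q) ?_) (le_max_right _ _)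
    have := normS _ hp
    linarith
  -- both big
  refine le_trans ?_ (le_max_left _ _)
  have hΔle := absdiff_le n hn i j
  have hcg := cos_ge_aux n hn _ hΔle
  have ha2 : a^2 = R^2 := by rcases hpf with ⟨rfl, -⟩ | ⟨rfl, -⟩ <;> ring
  have hb2 : b^2 = R^2 := by rcases hqf with ⟨rfl, -⟩ | ⟨rfl, -⟩ <;> ring
  apply big_dist n hn R hR0.le a b i j ha2 hb2
  -- establish the cosine bound in each sign case
  have hmixed : ∀ (hi : ρ i = R) (hj : σ j = R), (i:ℝ) * Real.pi / n ≠ (j:ℝ) * Real.pi / n →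
      True := fun _ _ _ => trivial
  have hkey_ne : (ρ i = R → σ j = R → i ≠ j) ∧ (σ i = R → ρ j = R → i ≠ j) := by
    constructor <;> intro h1 h2 h3 
    · subst h3; exact hdisj ⟨i, h1, h2⟩
    · subst h3; exact hdisj ⟨_, h2, h1⟩
  have hcos_le_of_ne : i ≠ j →
      Real.cos ((i : ℝ) * Real.pi / n - (j : ℝ) * Real.pi / n) ≤ Real.cos (Real.pi / n) := by
    intro hij
    apply cos_le_aux n hn
    · have h1 : (1:ℝ) ≤ |(i:ℝ) - (j:ℝ)| := by
        have : ((i:ℕ):ℤ) ≠ ((j:ℕ):ℤ) := by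
          simpa using fun h => hij (Fin.ext (by exact_mod_cast h))
        have := Int.one_le_abs (sub_ne_zero.mpr this)
        have h2 : (1:ℝ) ≤ |((i:ℕ):ℤ) - ((j:ℕ):ℤ)| := by exact_mod_cast this
        convert h2 using 2
        push_cast; ring
      have hpn : (0:ℝ) < Real.pi / n := by positivity
      have heq : (i : ℝ) * Real.pi / n - (j : ℝ) * Real.pi / n
          = ((i:ℝ) - (j:ℝ)) * (Real.pi / n) := by ring
      rw [heq, abs_mul, abs_of_nonneg hpn.le]
      calc Real.pi / n = 1 * (Real.pi / n) := by ring
        _ ≤ |(i:ℝ) - (j:ℝ)| * (Real.pi / n) := by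
            exact mul_le_mul_of_nonneg_right h1 hpn.le
    · refine le_trans hΔle ?_
      have : ((n:ℝ) - 1) * (Real.pi / n) = Real.pi - Real.pi / n := by field_simp
      rw [this]
      have : 0 < Real.pi / n := by positivity
      linarith
  rcases hpf with ⟨hA, hρi⟩ | ⟨hA, hσi⟩ <;> rcases hqf with ⟨hB, hρj⟩ | ⟨hB, hσj⟩ <;>
    rw [hA, hB]
  · nlinarith [hcg, sq_nonneg R]
  · have hij := hkey_ne.1 hρi hσj
    have := hcos_le_of_ne hij
    nlinarith [sq_nonneg R]
  · have hij := hkey_ne.2 hσi hρj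
    have := hcos_le_of_ne hij
    nlinarith [sq_nonneg R]
  · nlinarith [hcg, sq_nonneg R]
end
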